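/- arXiv:math/0608097 — 7 statements merged into one kernel-verified Lean document; each statement's English description precedes it below -/
import Mathlib

section
/- Let U and V be finite nonempty types, let R be a relation on U × V, and let μ and ν be probability mass functions on U and V respectively. Suppose that for every subset A ⊆ U one has μ(A) ≤ ν({y ∈ V : there exists x ∈ A with R x y}). Then there exists a probability mass function φ on U × V whose first marginal is μ, whose second marginal is ν, and whose support is contained in {(x,y) : R x y}. -/
/-!
The marginal pairs of probability measures on `U × V` supported on `R` form a compact convex
set. If `(μ, ν)` lay outside it, Hahn–Banach would give weights `F` on `U`, `G` on `V` with
`F x + G y ≥ 0` whenever `R x y`, but `∑ F μ + ∑ G ν < 0`. Hall's condition applied to the level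
sets `{F ≤ t}` says `μ {F ≤ t} ≤ ν {-G ≤ t}` for every `t`, so `-G` under `ν` is stochastically
dominated by `F` under `μ`, which forces `∑ (-G) ν ≤ ∑ F μ`.
-/

open Finset

section Dominance

variable {ι U V : Type*} [Fintype ι] [Fintype U] [Fintype V]

theorem sum_mul_eq_sum_min_mul_add (w F : ι → ℝ) {s m : ℝ} (hF : ∀ i, F i ≤ s ∨ F i = m) :
    ∑ i, F i * w i =
      ∑ i, min (F i) s * w i + (m - s) * (∑ i, w i - ∑ i with F i ≤ s, w i) := by
  rw [← sum_filter_add_sum_filter_not univ (fun i => F i ≤ s) w, add_sub_cancel_left,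
    sum_filter, mul_sum, ← sum_add_distrib]
  refine sum_congr rfl fun i _ => ?_
  by_cases hs : F i ≤ s
  · simp [hs]
  · obtain rfl : F i = m := (hF i).resolve_left hs
    simp [hs, min_eq_right (le_of_not_ge hs)]
    ring

theorem sum_mul_le_sum_mul_of_forall_sum_filter_le {μ : U → ℝ} {ν : V → ℝ}
    (htot : ∑ x, μ x = ∑ y, ν y) {F : U → ℝ} {K : V → ℝ}
    (hlev : ∀ t, ∑ x with F x ≤ t, μ x ≤ ∑ y with K y ≤ t, ν y) :
    ∑ y, K y * ν y ≤ ∑ x, F x * μ x := by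
  classical
  suffices ∀ S : Finset ℝ, ∀ F : U → ℝ, ∀ K : V → ℝ, (∀ x, F x ∈ S) → (∀ y, K y ∈ S) →
      (∀ t, ∑ x with F x ≤ t, μ x ≤ ∑ y with K y ≤ t, ν y) →
      ∑ y, K y * ν y ≤ ∑ x, F x * μ x from
    this (univ.image F ∪ univ.image K) F K (by simp) (by simp) hlev
  intro S
  induction S using Finset.induction_on_max with
  | empty =>
    intro F K hF hK _
    have : IsEmpty U := ⟨fun x => by simpa using hF x⟩
    have : IsEmpty V := ⟨fun y => by simpa using hK y⟩
    simp
  | insert m S hlt ih =>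
    intro F K hF hK hlev
    rcases S.eq_empty_or_nonempty with rfl | hS
    · simp only [insert_empty_eq, mem_singleton] at hF hK
      simp only [hF, hK, ← mul_sum, htot, le_refl]
    -- Truncate both functions at the second largest value `s`.
    set s := S.max' hS
    have hms : s < m := hlt s (S.max'_mem hS)
    have hsplit : ∀ v ∈ insert m S, v ≤ s ∨ v = m := fun v hv =>
      (mem_insert.1 hv).elim Or.inr fun h => Or.inl (S.le_max' _ h)
    have hmin : ∀ v ∈ insert m S, min v s ∈ S := by
      intro v hv
      rcases mem_insert.1 hv with rfl | h
      · simpa [min_eq_right hms.le] using S.max'_mem hS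
      · rwa [min_eq_left (S.le_max' _ h)]
    have hlev' : ∀ t, ∑ x with min (F x) s ≤ t, μ x ≤ ∑ y with min (K y) s ≤ t, ν y := by
      intro t
      by_cases hst : s ≤ t
      · simp [hst, htot]
      · simpa [min_le_iff, hst] using hlev t
    have hIH := ih (fun x => min (F x) s) (fun y => min (K y) s)
      (fun x => hmin _ (hF x)) (fun y => hmin _ (hK y)) hlev'
    rw [sum_mul_eq_sum_min_mul_add μ F fun x => hsplit _ (hF x),
      sum_mul_eq_sum_min_mul_add ν K fun y => hsplit _ (hK y)]
    nlinarith [hlev s]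

open scoped Classical in
theorem sum_mul_add_sum_mul_nonneg_of_hall (R : U → V → Prop) {μ : U → ℝ} {ν : V → ℝ}
    (hν0 : ∀ y, 0 ≤ ν y) (htot : ∑ x, μ x = ∑ y, ν y)
    (hcond : ∀ A : Finset U,
      ∑ x ∈ A, μ x ≤ ∑ y ∈ Finset.univ.filter (fun y => ∃ x ∈ A, R x y), ν y)
    {F : U → ℝ} {G : V → ℝ} (hFG : ∀ x y, R x y → 0 ≤ F x + G y) :
    0 ≤ ∑ x, F x * μ x + ∑ y, G y * ν y := by
  have hlev (t : ℝ) : ∑ x with F x ≤ t, μ x ≤ ∑ y with -G y ≤ t, ν y := by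
    refine (hcond _).trans (sum_le_sum_of_subset_of_nonneg ?_ fun y _ _ => hν0 y)
    intro y hy
    obtain ⟨x, hx, hxy⟩ := (mem_filter.1 hy).2
    have := hFG x y hxy
    simp only [mem_filter, mem_univ, true_and] at hx ⊢
    linarith
  have := sum_mul_le_sum_mul_of_forall_sum_filter_le htot hlev
  simp only [neg_mul, sum_neg_distrib] at this
  linarith

end Dominance

section Coupling

variable {U V : Type*} [Fintype U] [Fintype V]

def marginals : (U × V → ℝ) →ₗ[ℝ] (U ⊕ V → ℝ) where
  toFun φ := Sum.elim (fun x => ∑ y, φ (x, y)) (fun y => ∑ x, φ (x, y))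
  map_add' φ ψ := by ext (x | y) <;> simp [sum_add_distrib]
  map_smul' c φ := by ext (x | y) <;> simp [mul_sum]

theorem sum_mul_marginals (c : U ⊕ V → ℝ) (φ : U × V → ℝ) :
    ∑ i, c i * marginals φ i = ∑ p, φ p * (c (.inl p.1) + c (.inr p.2)) := by
  simp only [marginals, LinearMap.coe_mk, AddHom.coe_mk, Fintype.sum_sum_type, Sum.elim_inl,
    Sum.elim_inr, Fintype.sum_prod_type, mul_sum, mul_add, sum_add_distrib]
  rw [sum_comm (f := fun y x => c (.inr y) * φ (x, y))]
  simp only [mul_comm]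

def couplingsOn (R : U → V → Prop) : Set (U × V → ℝ) :=
  stdSimplex ℝ (U × V) ∩ {φ | ∀ p, ¬ R p.1 p.2 → φ p = 0}

theorem isCompact_couplingsOn (R : U → V → Prop) : IsCompact (couplingsOn R) := by
  refine (isCompact_stdSimplex ℝ (U × V)).inter_right ?_
  simp only [Set.ofPred_forall]
  exact isClosed_iInter fun p => isClosed_iInter fun _ =>
    isClosed_eq (continuous_apply p) continuous_const

theorem convex_couplingsOn (R : U → V → Prop) : Convex ℝ (couplingsOn R) := by
  refine (convex_stdSimplex ℝ _).inter fun φ hφ ψ hψ a b _ _ _ p hp => ?_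
  simp [hφ p hp, hψ p hp]

open scoped Classical in
theorem mem_marginals_image_couplingsOn (R : U → V → Prop) {μ : U → ℝ} {ν : V → ℝ}
    (hμ1 : ∑ x, μ x = 1) (hν1 : ∑ y, ν y = 1) (hν0 : ∀ y, 0 ≤ ν y)
    (hcond : ∀ A : Finset U,
      ∑ x ∈ A, μ x ≤ ∑ y ∈ Finset.univ.filter (fun y => ∃ x ∈ A, R x y), ν y) :
    Sum.elim μ ν ∈ marginals '' couplingsOn R := by
  by_contra hnot
  obtain ⟨f, u, hfK, hfμν⟩ := geometric_hahn_banach_closed_point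
    ((convex_couplingsOn R).linear_image marginals)
    ((isCompact_couplingsOn R).image marginals.continuous_of_finiteDimensional).isClosed hnot
  set c : U ⊕ V → ℝ := fun i => f fun j => if i = j then 1 else 0
  have hf (w : U ⊕ V → ℝ) : f w = ∑ i, c i * w i := by
    simp only [c, mul_comm (f _)]
    exact LinearMap.pi_apply_eq_sum_univ (f : (U ⊕ V → ℝ) →ₗ[ℝ] ℝ) w
  have hedge (x : U) (y : V) (hxy : R x y) : c (.inl x) + c (.inr y) < u := by
    have hδ : Pi.single (x, y) 1 ∈ couplingsOn R :=
      ⟨single_mem_stdSimplex ℝ _, fun p hp => Pi.single_eq_of_ne (by rintro rfl; exact hp hxy) _⟩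
    have := hfK _ ⟨_, hδ, rfl⟩
    rw [hf, sum_mul_marginals] at this
    simpa [Pi.single_apply, ite_mul] using this
  have := sum_mul_add_sum_mul_nonneg_of_hall R hν0 (hμ1.trans hν1.symm) hcond
    (F := fun x => u - c (.inl x)) (G := fun y => - c (.inr y))
    fun x y hxy => by linarith [hedge x y hxy]
  simp only [sub_mul, sum_sub_distrib, ← mul_sum, hμ1, neg_mul, sum_neg_distrib] at this
  rw [hf, Fintype.sum_sum_type] at hfμν
  simp only [Sum.elim_inl, Sum.elim_inr] at hfμν
  linarith

end Coupling

open scoped Classical in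
theorem strassen_coupling_general {U V : Type*} [Fintype U] [Fintype V]
    (R : U → V → Prop)
    (μ : U → ℝ) (ν : V → ℝ)
    (hμ1 : ∑ x, μ x = 1)
    (hν0 : ∀ y, 0 ≤ ν y) (hν1 : ∑ y, ν y = 1)
    (hcond : ∀ A : Finset U,
      ∑ x ∈ A, μ x ≤ ∑ y ∈ Finset.univ.filter (fun y => ∃ x ∈ A, R x y), ν y) :
    ∃ φ : U × V → ℝ, (∀ p, 0 ≤ φ p) ∧ (∑ p, φ p = 1) ∧
      (∀ x, ∑ y, φ (x, y) = μ x) ∧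
      (∀ y, ∑ x, φ (x, y) = ν y) ∧
      (∀ p, 0 < φ p → R p.1 p.2) := by
  obtain ⟨φ, ⟨⟨hφ0, hφ1⟩, hφR⟩, hφ⟩ := mem_marginals_image_couplingsOn R hμ1 hν1 hν0 hcond
  exact ⟨φ, hφ0, hφ1, fun x => congrFun hφ (.inl x), fun y => congrFun hφ (.inr y),
    fun p hp => of_not_not fun hR => hp.ne' (hφR p hR)⟩

open scoped Classical in
/-- Strassen-type coupling lemma (Lemma 2.2 of AGLS): if μ, ν are probability
mass functions on finite nonempty types U, V and for every A ⊆ U,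
μ(A) ≤ ν({y : ∃ x ∈ A, R x y}), then there is a coupling φ of μ and ν
supported on the relation R. -/
theorem strassen_coupling {U V : Type*} [Fintype U] [Fintype V]
    [Nonempty U] [Nonempty V] (R : U → V → Prop)
    (μ : U → ℝ) (ν : V → ℝ)
    (hμ0 : ∀ x, 0 ≤ μ x) (hμ1 : ∑ x, μ x = 1)
    (hν0 : ∀ y, 0 ≤ ν y) (hν1 : ∑ y, ν y = 1)
    (hcond : ∀ A : Finset U,
      ∑ x ∈ A, μ x ≤ ∑ y ∈ Finset.univ.filter (fun y => ∃ x ∈ A, R x y), ν y) :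
    ∃ φ : U × V → ℝ, (∀ p, 0 ≤ φ p) ∧ (∑ p, φ p = 1) ∧
      (∀ x, ∑ y, φ (x, y) = μ x) ∧
      (∀ y, ∑ x, φ (x, y) = ν y) ∧
      (∀ p, 0 < φ p → R p.1 p.2) :=
  strassen_coupling_general R μ ν hμ1 hν0 hν1 hcond
end

section
/- Define w : [0, 3/2] → ℝ by w(t) = 5/4 − (3/4)·exp(2(1 − √(1+2t))) − (1/2)·√(1+2t). Then w(0) = 0, w is differentiable on [0, 3/2] with w'(t) = 2(1 − w(t))/√(1+2t) − 1 for all t ∈ [0, 3/2], and w(3/2) = 1/4 − 3/(4e²). -/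
/-!
Substituting `s = √(1 + 2t)`, so that `ds/dt = 1/s`, turns the equation into the linear
equation `g' = 2(1 - g) - s` in `s`, whose solutions are `5/4 - s/2 - c e^{2(1 - s)}`;
the initial condition at `s = 1` forces `c = 3/4`.
-/

open Real

noncomputable def sqrtVarSolution (c s : ℝ) : ℝ :=
  5/4 - c * exp (2 * (1 - s)) - 1/2 * s

theorem hasDerivAt_sqrtVarSolution (c s : ℝ) :
    HasDerivAt (sqrtVarSolution c) (2 * (1 - sqrtVarSolution c s) - s) s := by
  have hexp : HasDerivAt (fun σ : ℝ => exp (2 * (1 - σ))) (exp (2 * (1 - s)) * -2) s := by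
    simpa using (((hasDerivAt_id s).const_sub 1).const_mul 2).exp
  refine (((hexp.const_mul c).const_sub (5/4)).sub
    ((hasDerivAt_id s).const_mul (1/2))).congr_deriv ?_
  simp only [sqrtVarSolution]
  ring

theorem hasDerivAt_sqrt_one_add_two_mul {t : ℝ} (ht : 0 < 1 + 2 * t) :
    HasDerivAt (fun x : ℝ => √(1 + 2 * x)) (√(1 + 2 * t))⁻¹ t := by
  have hlin : HasDerivAt (fun x : ℝ => 1 + 2 * x) 2 t := by
    simpa using ((hasDerivAt_id t).const_mul 2).const_add 1
  convert hlin.sqrt ht.ne' using 1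
  field_simp

/-- The function w(t) = 5/4 − (3/4)e^{2(1−√(1+2t))} − (1/2)√(1+2t) satisfies
w(0) = 0, solves w' = 2(1−w)/√(1+2t) − 1 on [0, 3/2], and w(3/2) = 1/4 − 3/(4e²). -/
theorem w_solution_K_zero (w : ℝ → ℝ)
    (hw : ∀ t, w t = 5/4 - (3/4) * Real.exp (2 * (1 - Real.sqrt (1 + 2 * t)))
        - (1/2) * Real.sqrt (1 + 2 * t)) :
    w 0 = 0 ∧
      (∀ t ∈ Set.Icc (0:ℝ) (3/2),
        HasDerivAt w (2 * (1 - w t) / Real.sqrt (1 + 2 * t) - 1) t) ∧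
      w (3/2) = 1/4 - 3 / (4 * Real.exp 2) := by
  have hw_comp : w = sqrtVarSolution (3/4) ∘ fun t => √(1 + 2 * t) := by
    funext t
    simp only [hw, Function.comp, sqrtVarSolution]
  refine ⟨by norm_num [hw], fun t ht => ?_, ?_⟩
  · have hpos : 0 < 1 + 2 * t := by linarith [ht.1]
    have hs : √(1 + 2 * t) ≠ 0 := (sqrt_pos.mpr hpos).ne'
    have hderiv := (hasDerivAt_sqrtVarSolution (3/4) _).comp t
      (hasDerivAt_sqrt_one_add_two_mul hpos)
    rw [← hw_comp] at hderiv
    refine hderiv.congr_deriv ?_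
    rw [hw_comp, Function.comp_apply]
    field_simp
  · have hsqrt : √(1 + 2 * (3/2 : ℝ)) = 2 := by
      rw [show (1 + 2 * (3/2 : ℝ)) = 2 ^ 2 by norm_num, sqrt_sq zero_le_two]
    rw [hw, hsqrt, show (2 : ℝ) * (1 - 2) = -2 by norm_num, exp_neg]
    field_simp
    ring
end

section
/- Let K ≥ 1 and b > 0, and let y, z : [0, b) → ℝ be differentiable functions with y(0) = 1, z(0) = 1, 0 ≤ y(t) ≤ 1 for all t ∈ [0, b), satisfying y'(t) = −y(t)/(1 + (K−1)(1−y(t))²) and z'(t) = (z(t)² + (K−1)(z(t)−y(t))²)/(1 + (K−1)(1−y(t))²) for all t ∈ [0, b). Then z(t) ≥ 1/(1 − t) for all t ∈ [0, min(b, 1)), and consequently b ≤ 1. -/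
/-!
Once `z ≥ 1 ≥ y ≥ 0`, the susceptibility equation gives `z' ≥ z²`, so `1 / z + t` is
non-increasing and `1 / z(t) ≤ 1 - t`. This is the bound `z(t) ≥ 1 / (1 - t)`; and if `b > 1`
it would give `1 / z(1) ≤ 0`, which is impossible.
-/

open Set

section DerivWithin

variable {D : Set ℝ} {f f' : ℝ → ℝ}

lemma monotoneOn_of_hasDerivWithinAt_nonneg_of_mem (hD : Convex ℝ D)
    (hf : ∀ t ∈ D, HasDerivWithinAt f (f' t) D t) (hf' : ∀ t ∈ D, 0 ≤ f' t) :
    MonotoneOn f D :=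
  monotoneOn_of_hasDerivWithinAt_nonneg hD (fun t ht ↦ (hf t ht).continuousWithinAt)
    (fun t ht ↦ (hf t (interior_subset ht)).mono interior_subset)
    (fun t ht ↦ hf' t (interior_subset ht))

lemma antitoneOn_of_hasDerivWithinAt_nonpos_of_mem (hD : Convex ℝ D)
    (hf : ∀ t ∈ D, HasDerivWithinAt f (f' t) D t) (hf' : ∀ t ∈ D, f' t ≤ 0) :
    AntitoneOn f D :=
  antitoneOn_of_hasDerivWithinAt_nonpos hD (fun t ht ↦ (hf t ht).continuousWithinAt)
    (fun t ht ↦ (hf t (interior_subset ht)).mono interior_subset)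
    (fun t ht ↦ hf' t (interior_subset ht))

lemma antitoneOn_inv_add_id_of_sq_le_deriv (hD : Convex ℝ D)
    (hf : ∀ t ∈ D, HasDerivWithinAt f (f' t) D t) (hpos : ∀ t ∈ D, 0 < f t)
    (hric : ∀ t ∈ D, f t ^ 2 ≤ f' t) :
    AntitoneOn (fun t ↦ (f t)⁻¹ + t) D := by
  refine antitoneOn_of_hasDerivWithinAt_nonpos_of_mem hD
    (fun t ht ↦ ((hf t ht).inv (hpos t ht).ne').add (hasDerivWithinAt_id t D)) fun t ht ↦ ?_
  have hsq : 0 < f t ^ 2 := pow_pos (hpos t ht) 2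
  have : 1 ≤ f' t / f t ^ 2 := (one_le_div hsq).2 (hric t ht)
  rw [neg_div]
  linarith

lemma inv_le_one_sub_of_sq_le_deriv {b : ℝ} (hf0 : f 0 = 1)
    (hf : ∀ t ∈ Ico 0 b, HasDerivWithinAt f (f' t) (Ico 0 b) t)
    (hpos : ∀ t ∈ Ico 0 b, 0 < f t) (hric : ∀ t ∈ Ico 0 b, f t ^ 2 ≤ f' t) :
    ∀ t ∈ Ico 0 b, (f t)⁻¹ ≤ 1 - t := by
  intro t ht
  have h := antitoneOn_inv_add_id_of_sq_le_deriv (convex_Ico 0 b) hf hpos hric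
    ⟨le_rfl, ht.1.trans_lt ht.2⟩ ht ht.1
  simp only [hf0, inv_one, add_zero] at h
  linarith

end DerivWithin

noncomputable def susceptibilityRate (K y z : ℝ) : ℝ :=
  (z ^ 2 + (K - 1) * (z - y) ^ 2) / (1 + (K - 1) * (1 - y) ^ 2)

section SusceptibilityRate

variable {K y z : ℝ}

lemma susceptibilityRate_denom_pos (hK : 1 ≤ K) : 0 < 1 + (K - 1) * (1 - y) ^ 2 := by
  have : 0 ≤ (K - 1) * (1 - y) ^ 2 := mul_nonneg (by linarith) (sq_nonneg _)
  linarith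

lemma susceptibilityRate_nonneg (hK : 1 ≤ K) : 0 ≤ susceptibilityRate K y z :=
  div_nonneg (add_nonneg (sq_nonneg _) (mul_nonneg (by linarith) (sq_nonneg _)))
    (susceptibilityRate_denom_pos hK).le

lemma sq_le_susceptibilityRate (hK : 1 ≤ K) (hy0 : 0 ≤ y) (hy1 : y ≤ 1) (hz : 1 ≤ z) :
    z ^ 2 ≤ susceptibilityRate K y z := by
  rw [susceptibilityRate, le_div_iff₀ (susceptibilityRate_denom_pos hK)]
  -- `(z - y)² - z² (1 - y)² = y (z - 1) (2z - y - zy)`, and `2z - y - zy ≥ 2 (1 - y) ≥ 0`.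
  have hfactor : 0 ≤ (K - 1) * (y * (z - 1)) * (2 * z - y - z * y) :=
    mul_nonneg (mul_nonneg (by linarith) (mul_nonneg hy0 (by linarith))) (by nlinarith)
  nlinarith [hfactor]

end SusceptibilityRate

theorem singularity_le_one_K_ge_one_general (K b : ℝ) (hK : 1 ≤ K) (hb : 0 < b)
    (y z : ℝ → ℝ) (hz0 : z 0 = 1)
    (hyb : ∀ t ∈ Set.Ico (0:ℝ) b, 0 ≤ y t ∧ y t ≤ 1)
    (hzd : ∀ t ∈ Set.Ico (0:ℝ) b,
      HasDerivWithinAt z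
        ((z t ^ 2 + (K - 1) * (z t - y t) ^ 2) / (1 + (K - 1) * (1 - y t) ^ 2))
        (Set.Ico 0 b) t) :
    (∀ t ∈ Set.Ico (0:ℝ) (min b 1), 1 / (1 - t) ≤ z t) ∧ b ≤ 1 := by
  have hz1 : ∀ t ∈ Ico 0 b, 1 ≤ z t := fun t ht ↦ hz0 ▸
    monotoneOn_of_hasDerivWithinAt_nonneg_of_mem (convex_Ico 0 b) hzd
      (fun _ _ ↦ susceptibilityRate_nonneg hK) ⟨le_rfl, hb⟩ ht ht.1
  have hzpos : ∀ t ∈ Ico 0 b, 0 < z t := fun t ht ↦ one_pos.trans_le (hz1 t ht)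
  have hinv : ∀ t ∈ Ico 0 b, (z t)⁻¹ ≤ 1 - t :=
    inv_le_one_sub_of_sq_le_deriv hz0 hzd hzpos fun t ht ↦
      sq_le_susceptibilityRate hK (hyb t ht).1 (hyb t ht).2 (hz1 t ht)
  refine ⟨fun t ht ↦ ?_, ?_⟩
  · have htb : t ∈ Ico 0 b := ⟨ht.1, ht.2.trans_le (min_le_left b 1)⟩
    have ht1 : 0 < 1 - t := sub_pos.2 (ht.2.trans_le (min_le_right b 1))
    rw [one_div, inv_le_comm₀ ht1 (hzpos t htb)]
    exact hinv t htb
  · by_contra! hb1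
    have h1 : (1 : ℝ) ∈ Ico 0 b := ⟨zero_le_one, hb1⟩
    have := hinv 1 h1
    have := inv_pos.2 (hzpos 1 h1)
    linarith

/-- For K ≥ 1, if y and z solve the isolated-vertex and susceptibility ODEs of the
biased process G∧_K on [0, b) with y(0) = z(0) = 1 and 0 ≤ y ≤ 1, then
z(t) ≥ 1/(1−t) on [0, min(b,1)), and consequently b ≤ 1. -/
theorem singularity_le_one_K_ge_one (K b : ℝ) (hK : 1 ≤ K) (hb : 0 < b)
    (y z : ℝ → ℝ) (hy0 : y 0 = 1) (hz0 : z 0 = 1)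
    (hyb : ∀ t ∈ Set.Ico (0:ℝ) b, 0 ≤ y t ∧ y t ≤ 1)
    (hyd : ∀ t ∈ Set.Ico (0:ℝ) b,
      HasDerivWithinAt y (-(y t) / (1 + (K - 1) * (1 - y t) ^ 2)) (Set.Ico 0 b) t)
    (hzd : ∀ t ∈ Set.Ico (0:ℝ) b,
      HasDerivWithinAt z
        ((z t ^ 2 + (K - 1) * (z t - y t) ^ 2) / (1 + (K - 1) * (1 - y t) ^ 2))
        (Set.Ico 0 b) t) :
    (∀ t ∈ Set.Ico (0:ℝ) (min b 1), 1 / (1 - t) ≤ z t) ∧ b ≤ 1 :=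
  singularity_le_one_K_ge_one_general K b hK hb y z hz0 hyb hzd
end

section
/- Let 0 < K < 1 and let y, z be real numbers with 0 ≤ y ≤ 1, z ≥ 1, and (1−K)·y·(2−y) ≤ K. Then (z² + (K−1)(z−y)²)/(1 + (K−1)(1−y)²) ≥ z²/2. -/
/-! Numerator and denominator are both of the form `z² + (K - 1)(z - y)² = Kz² + (1 - K)y(2z - y)`,
the denominator at `z = 1`. Hence the numerator is at least `Kz²`, while the hypothesis
`(1 - K)y(2 - y) ≤ K` puts the denominator between `K` and `2K`. -/

lemma sq_add_mul_sub_sq_eq (K y z : ℝ) :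
    z ^ 2 + (K - 1) * (z - y) ^ 2 = K * z ^ 2 + (1 - K) * (y * (2 * z - y)) := by
  ring

lemma mul_sq_le_sq_add_mul_sub_sq {K y z : ℝ} (hK : K ≤ 1) (hy : 0 ≤ y) (hyz : y ≤ 2 * z) :
    K * z ^ 2 ≤ z ^ 2 + (K - 1) * (z - y) ^ 2 := by
  rw [sq_add_mul_sub_sq_eq]
  have : 0 ≤ (1 - K) * (y * (2 * z - y)) :=
    mul_nonneg (by linarith) (mul_nonneg hy (by linarith))
  linarith

lemma one_add_mul_sub_sq_le_two_mul {K y : ℝ} (hyK : (1 - K) * y * (2 - y) ≤ K) :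
    1 + (K - 1) * (1 - y) ^ 2 ≤ 2 * K := by
  have := sq_add_mul_sub_sq_eq K y 1
  linarith

/-- For 0 < K < 1, 0 ≤ y ≤ 1, z ≥ 1 and (1−K)y(2−y) ≤ K, the right-hand side of
the susceptibility ODE is at least z²/2. -/
theorem susceptibility_rhs_ge_half_sq (K y z : ℝ) (hK0 : 0 < K) (hK1 : K < 1)
    (hy0 : 0 ≤ y) (hy1 : y ≤ 1) (hz : 1 ≤ z)
    (hyK : (1 - K) * y * (2 - y) ≤ K) :
    z ^ 2 / 2 ≤ (z ^ 2 + (K - 1) * (z - y) ^ 2) / (1 + (K - 1) * (1 - y) ^ 2) := by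
  have hnum : K * z ^ 2 ≤ z ^ 2 + (K - 1) * (z - y) ^ 2 :=
    mul_sq_le_sq_add_mul_sub_sq hK1.le hy0 (by linarith)
  have hden : K ≤ 1 + (K - 1) * (1 - y) ^ 2 := by
    simpa using mul_sq_le_sq_add_mul_sub_sq (z := 1) hK1.le hy0 (by linarith)
  calc z ^ 2 / 2 = K * z ^ 2 / (2 * K) := by field_simp
    _ ≤ _ := div_le_div₀ ((by positivity : 0 ≤ K * z ^ 2).trans hnum) hnum (hK0.trans_le hden)
        (one_add_mul_sub_sq_le_two_mul hyK)
end

section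
/- Let 0 < K < 1 and b > 0, and let u : [0, b) → ℝ be differentiable with u(0) = 0, u'(t) = (1 − u(t))/(1 − (1−K)·u(t)²) for all t ∈ [0, b), and 0 ≤ u(t) < √(1−K) for all t ∈ [0, b). Then b ≤ √(1−K) + (1−K)/2 + (1−K)^{3/2}/3 + (1−K)²/4, and this bound is at most 25/12. -/
/-!
Let `a = 1 - K` and let `L(x) = x + x²/2 + x³/3 + x⁴/4` be the degree-4 Taylor polynomial of
`-log (1 - x)` (`logTaylor4`). Since `L'(x) (1 - x) = 1 - x⁴`, along the solution
`(L ∘ u)' = (1 - u⁴) / (1 - a u²) ≥ 1`, because `u⁴ ≤ a u²` while `u² ≤ a`. Hence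
`t ≤ L (u t) ≤ L (√a)` for every `t ∈ [0, b)`, so `b ≤ L (√a) ≤ L 1 = 25/12`.
-/

open Set

theorem Convex.mul_sub_le_comp_sub_of_le_deriv {D : Set ℝ} (hD : Convex ℝ D)
    {F F' u u' : ℝ → ℝ} {C : ℝ} (hF : ∀ x, HasDerivAt F (F' x) x)
    (hu : ∀ t ∈ D, HasDerivWithinAt u (u' t) D t) (hC : ∀ t ∈ interior D, C ≤ F' (u t) * u' t) :
    ∀ᵉ (s ∈ D) (t ∈ D), s ≤ t → C * (t - s) ≤ F (u t) - F (u s) := by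
  have hcomp : ∀ t ∈ interior D, HasDerivAt (F ∘ u) (F' (u t) * u' t) t := fun t ht =>
    (hF (u t)).comp t ((hu t (interior_subset ht)).hasDerivAt (mem_interior_iff_mem_nhds.mp ht))
  refine hD.mul_sub_le_image_sub_of_le_deriv (f := F ∘ u) ?_ ?_ ?_
  · exact fun t ht => (hF (u t)).continuousAt.comp_continuousWithinAt (hu t ht).continuousWithinAt
  · exact fun t ht => (hcomp t ht).differentiableAt.differentiableWithinAt
  · exact fun t ht => (hcomp t ht).deriv ▸ hC t ht

noncomputable def logTaylor4 (x : ℝ) : ℝ := x + x ^ 2 / 2 + x ^ 3 / 3 + x ^ 4 / 4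

theorem hasDerivAt_logTaylor4 (x : ℝ) : HasDerivAt logTaylor4 (1 + x + x ^ 2 + x ^ 3) x := by
  have h := (((hasDerivAt_id x).add ((hasDerivAt_pow 2 x).div_const 2)).add
    ((hasDerivAt_pow 3 x).div_const 3)).add ((hasDerivAt_pow 4 x).div_const 4)
  exact h.congr_deriv (by ring)

theorem logTaylor4_zero : logTaylor4 0 = 0 := by norm_num [logTaylor4]

theorem logTaylor4_le_logTaylor4 {x y : ℝ} (hx : 0 ≤ x) (hxy : x ≤ y) :
    logTaylor4 x ≤ logTaylor4 y := by
  unfold logTaylor4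
  gcongr

theorem logTaylor4_one : logTaylor4 1 = 25 / 12 := by norm_num [logTaylor4]

theorem logTaylor4_sqrt {a : ℝ} (ha : 0 ≤ a) :
    logTaylor4 √a = √a + a / 2 + a ^ ((3 : ℝ) / 2) / 3 + a ^ 2 / 4 := by
  have h3 : √a ^ 3 = a ^ ((3 : ℝ) / 2) := by
    rw [Real.sqrt_eq_rpow, ← Real.rpow_natCast, ← Real.rpow_mul ha]
    norm_num
  have h4 : √a ^ 4 = a ^ 2 := by
    rw [show (4 : ℕ) = 2 * 2 from rfl, pow_mul, Real.sq_sqrt ha]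
  rw [logTaylor4, Real.sq_sqrt ha, h3, h4]

theorem one_le_mul_div_of_sq_lt {a x : ℝ} (ha : a ≤ 1) (hx : x ^ 2 < a) :
    1 ≤ (1 + x + x ^ 2 + x ^ 3) * ((1 - x) / (1 - a * x ^ 2)) := by
  have hden : 0 < 1 - a * x ^ 2 := by nlinarith [sq_nonneg x]
  rw [← mul_div_assoc, le_div_iff₀ hden]
  nlinarith [sq_nonneg x]

theorem tstar_bound_general (K b : ℝ) (hK0 : 0 < K) (hK1 : K < 1)
    (u : ℝ → ℝ) (hu0 : u 0 = 0)
    (hud : ∀ t ∈ Set.Ico (0:ℝ) b,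
      HasDerivWithinAt u ((1 - u t) / (1 - (1 - K) * u t ^ 2)) (Set.Ico 0 b) t)
    (hur : ∀ t ∈ Set.Ico (0:ℝ) b, 0 ≤ u t ∧ u t < Real.sqrt (1 - K)) :
    b ≤ Real.sqrt (1 - K) + (1 - K) / 2 + (1 - K) ^ ((3:ℝ)/2) / 3 + (1 - K) ^ 2 / 4 ∧
      Real.sqrt (1 - K) + (1 - K) / 2 + (1 - K) ^ ((3:ℝ)/2) / 3 + (1 - K) ^ 2 / 4
        ≤ 25 / 12 := by
  have hsq : ∀ t ∈ Ico (0:ℝ) b, u t ^ 2 < 1 - K := fun t ht =>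
    (Real.lt_sqrt (hur t ht).1).mp (hur t ht).2
  have hgrowth := (convex_Ico 0 b).mul_sub_le_comp_sub_of_le_deriv hasDerivAt_logTaylor4 hud
    fun t ht => one_le_mul_div_of_sq_lt (by linarith) (hsq t (interior_subset ht))
  have hbound : ∀ t ∈ Ico (0:ℝ) b, t ≤ logTaylor4 √(1 - K) := fun t ht => by
    have h := hgrowth 0 ⟨le_rfl, ht.1.trans_lt ht.2⟩ t ht ht.1
    rw [hu0, logTaylor4_zero] at h
    linarith [logTaylor4_le_logTaylor4 (hur t ht).1 (hur t ht).2.le]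
  rw [← logTaylor4_sqrt (by linarith)]
  constructor
  · refine le_of_forall_lt_imp_le_of_dense fun t ht => ?_
    rcases lt_or_ge t 0 with ht0 | ht0
    · linarith [logTaylor4_le_logTaylor4 le_rfl (Real.sqrt_nonneg (1 - K)), logTaylor4_zero]
    · exact hbound t ⟨ht0, ht⟩
  · rw [← logTaylor4_one]
    exact logTaylor4_le_logTaylor4 (Real.sqrt_nonneg _) (Real.sqrt_le_one.mpr (by linarith))

/-- For 0 < K < 1, if u solves u' = (1−u)/(1−(1−K)u²) on [0, b) with u(0) = 0 and
0 ≤ u < √(1−K) there, then b ≤ √(1−K) + (1−K)/2 + (1−K)^{3/2}/3 + (1−K)²/4 ≤ 25/12. -/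
theorem tstar_bound (K b : ℝ) (hK0 : 0 < K) (hK1 : K < 1) (hb : 0 < b)
    (u : ℝ → ℝ) (hu0 : u 0 = 0)
    (hud : ∀ t ∈ Set.Ico (0:ℝ) b,
      HasDerivWithinAt u ((1 - u t) / (1 - (1 - K) * u t ^ 2)) (Set.Ico 0 b) t)
    (hur : ∀ t ∈ Set.Ico (0:ℝ) b, 0 ≤ u t ∧ u t < Real.sqrt (1 - K)) :
    b ≤ Real.sqrt (1 - K) + (1 - K) / 2 + (1 - K) ^ ((3:ℝ)/2) / 3 + (1 - K) ^ 2 / 4 ∧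
      Real.sqrt (1 - K) + (1 - K) / 2 + (1 - K) ^ ((3:ℝ)/2) / 3 + (1 - K) ^ 2 / 4
        ≤ 25 / 12 :=
  tstar_bound_general K b hK0 hK1 u hu0 hud hur
end

section
/- Let K > 0 and b > 0, and let y, z : [0, b) → ℝ be differentiable functions with y(0) = 1, z(0) = 1, 0 ≤ y(t) ≤ 1 for all t ∈ [0, b), satisfying y'(t) = −y(t)/(1 + (K−1)(1−y(t))²) and z'(t) = (z(t)² + (K−1)(z(t)−y(t))²)/(1 + (K−1)(1−y(t))²) for all t ∈ [0, b). Then b < 5. -/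
/-!
Write `D = 1 + (K-1)(1-y)²` and `N = z² + (K-1)(z-y)²`, so that `y' = -y/D` and `z' = N/D`.
The level `z = 1` is a barrier (there `N = D`, so `z' = 1`), hence `z ≥ 1`; and `N - zD`
factors as `(z-1)(K(z-y²) + y²) ≥ 0`, so `z' ≥ z` and `z ≥ eᵗ`. Since `D ≤ K + 2y`, the
isolated fraction falls at rate at least `1/3` while `y ≥ K`, so `y ≤ K` from `t = 3` on.
There `z²D ≤ 3N`, i.e. `(1/z)' ≤ -1/3`, and starting from `1/z(3) ≤ e⁻³ < 1/3` the positive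
function `1/z` would have to become negative before `t = 4`.
-/

open Set Real

theorem Convex.monotoneOn_of_hasDerivWithinAt_nonneg {D : Set ℝ} (hD : Convex ℝ D)
    {f f' : ℝ → ℝ} (hf : ∀ x ∈ D, HasDerivWithinAt f (f' x) D x)
    (hf'₀ : ∀ x ∈ interior D, 0 ≤ f' x) : MonotoneOn f D :=
  _root_.monotoneOn_of_hasDerivWithinAt_nonneg hD (fun x hx ↦ (hf x hx).continuousWithinAt)
    (fun x hx ↦ (hf x (interior_subset hx)).mono interior_subset) hf'₀

theorem Convex.antitoneOn_of_hasDerivWithinAt_nonpos {D : Set ℝ} (hD : Convex ℝ D)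
    {f f' : ℝ → ℝ} (hf : ∀ x ∈ D, HasDerivWithinAt f (f' x) D x)
    (hf'₀ : ∀ x ∈ interior D, f' x ≤ 0) : AntitoneOn f D :=
  _root_.antitoneOn_of_hasDerivWithinAt_nonpos hD (fun x hx ↦ (hf x hx).continuousWithinAt)
    (fun x hx ↦ (hf x (interior_subset hx)).mono interior_subset) hf'₀

theorem HasDerivWithinAt.Ici_of_Ico {f : ℝ → ℝ} {f' a b x : ℝ}
    (hf : HasDerivWithinAt f f' (Ico a b) x) (hx : x ∈ Ico a b) :
    HasDerivWithinAt f f' (Ici x) x :=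
  hf.mono_of_mem_nhdsWithin <| Filter.mem_of_superset (Ico_mem_nhdsGE hx.2)
    (Ico_subset_Ico_left hx.1)

namespace BiasedProcess

section Algebra

variable {K y z : ℝ}

theorem denom_pos (hK : 0 < K) (hy₀ : 0 ≤ y) (hy₁ : y ≤ 1) :
    0 < 1 + (K - 1) * (1 - y) ^ 2 := by
  nlinarith [mul_nonneg hK.le (sq_nonneg (1 - y)), mul_nonneg hy₀ (by linarith : 0 ≤ 2 - y)]

theorem denom_le (hK : 0 ≤ K) (hy₀ : 0 ≤ y) (hy₂ : y ≤ 2) :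
    1 + (K - 1) * (1 - y) ^ 2 ≤ K + 2 * y := by
  nlinarith [mul_nonneg hy₀ (mul_nonneg hK (by linarith : 0 ≤ 2 - y))]

theorem mul_denom_le_numer (hK : 0 ≤ K) (hy₀ : 0 ≤ y) (hy₁ : y ≤ 1) (hz : 1 ≤ z) :
    z * (1 + (K - 1) * (1 - y) ^ 2) ≤ z ^ 2 + (K - 1) * (z - y) ^ 2 := by
  have hy2 : y ^ 2 ≤ z := by nlinarith
  nlinarith [mul_nonneg (sub_nonneg.2 hz) (add_nonneg (mul_nonneg hK (sub_nonneg.2 hy2))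
    (sq_nonneg y))]

theorem sq_mul_denom_le_three_mul_numer (hK : 0 < K) (hy₀ : 0 ≤ y) (hy₁ : y ≤ 1)
    (hyK : y ≤ K) (hz : 1 ≤ z) :
    z ^ 2 * (1 + (K - 1) * (1 - y) ^ 2) ≤ 3 * (z ^ 2 + (K - 1) * (z - y) ^ 2) := by
  rcases le_total 1 K with hK1 | hK1
  · -- `N - z²D = (K-1) y (z-1) (2z - y(z+1))`
    have h : 0 ≤ (K - 1) * y * (z - 1) * (2 * z - y * (z + 1)) := by
      have : 0 ≤ 2 * z - y * (z + 1) := by nlinarith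
      have := sub_nonneg.2 hz
      have := sub_nonneg.2 hK1
      positivity
    nlinarith [sq_nonneg z, mul_nonneg (sub_nonneg.2 hK1) (sq_nonneg (z - y))]
  · -- `N - Kz² = (1-K) y (2z - y)` and `D ≤ K + 2y ≤ 3K`
    have hN : K * z ^ 2 ≤ z ^ 2 + (K - 1) * (z - y) ^ 2 := by
      nlinarith [mul_nonneg (sub_nonneg.2 hK1) (mul_nonneg hy₀ (by linarith : 0 ≤ 2 * z - y))]
    have hD := denom_le hK.le hy₀ (by linarith)
    nlinarith [mul_le_mul_of_nonneg_left hD (sq_nonneg z)]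

end Algebra

structure IsSolution (K b : ℝ) (y z : ℝ → ℝ) : Prop where
  y_zero : y 0 = 1
  z_zero : z 0 = 1
  y_mem : ∀ t ∈ Ico (0:ℝ) b, 0 ≤ y t ∧ y t ≤ 1
  hasDerivWithinAt_y : ∀ t ∈ Ico (0:ℝ) b,
    HasDerivWithinAt y (-(y t) / (1 + (K - 1) * (1 - y t) ^ 2)) (Ico 0 b) t
  hasDerivWithinAt_z : ∀ t ∈ Ico (0:ℝ) b,
    HasDerivWithinAt z ((z t ^ 2 + (K - 1) * (z t - y t) ^ 2) / (1 + (K - 1) * (1 - y t) ^ 2))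
      (Ico 0 b) t

namespace IsSolution

variable {K b : ℝ} {y z : ℝ → ℝ}

theorem denom_pos (h : IsSolution K b y z) (hK : 0 < K) {t : ℝ} (ht : t ∈ Ico 0 b) :
    0 < 1 + (K - 1) * (1 - y t) ^ 2 :=
  BiasedProcess.denom_pos hK (h.y_mem t ht).1 (h.y_mem t ht).2

theorem one_le_z (h : IsSolution K b y z) (hK : 0 < K) {t : ℝ} (ht : t ∈ Ico 0 b) :
    1 ≤ z t := by
  have hsub : Icc 0 t ⊆ Ico 0 b := Icc_subset_Ico_right ht.2
  refine image_le_of_deriv_right_lt_deriv_boundary' (f' := fun _ ↦ 0) continuousOn_const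
    (fun x _ ↦ hasDerivWithinAt_const x _ 1) (by rw [h.z_zero])
    (fun x hx ↦ (h.hasDerivWithinAt_z x (hsub hx)).continuousWithinAt.mono hsub)
    (fun x hx ↦ (h.hasDerivWithinAt_z x (hsub (Ico_subset_Icc_self hx))).Ici_of_Ico
      (hsub (Ico_subset_Icc_self hx)))
    (fun x hx hzx ↦ ?_) ⟨ht.1, le_rfl⟩
  have hD := h.denom_pos hK (hsub (Ico_subset_Icc_self hx))
  rw [← hzx, one_pow]
  exact div_pos hD hD

theorem exp_le_z (h : IsSolution K b y z) (hK : 0 < K) {t : ℝ} (ht : t ∈ Ico 0 b) :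
    exp t ≤ z t := by
  have hmono : MonotoneOn (fun s ↦ z s * exp (-s)) (Ico 0 b) := by
    refine (convex_Ico 0 b).monotoneOn_of_hasDerivWithinAt_nonneg
      (fun s hs ↦ (h.hasDerivWithinAt_z s hs).mul (hasDerivAt_neg s).exp.hasDerivWithinAt)
      fun s hs ↦ ?_
    have hs' := interior_subset (s := Ico 0 b) hs
    have hz' : z s ≤ (z s ^ 2 + (K - 1) * (z s - y s) ^ 2) / (1 + (K - 1) * (1 - y s) ^ 2) :=
      (le_div_iff₀ (h.denom_pos hK hs')).2 <| mul_denom_le_numer hK.le (h.y_mem s hs').1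
        (h.y_mem s hs').2 (h.one_le_z hK hs')
    nlinarith [exp_pos (-s)]
  have h1 : 1 ≤ z t * exp (-t) := by
    simpa [h.z_zero] using hmono ⟨le_rfl, ht.1.trans_lt ht.2⟩ ht ht.1
  calc exp t ≤ exp t * (z t * exp (-t)) := le_mul_of_one_le_right (exp_pos t).le h1
    _ = z t := by rw [mul_left_comm, ← exp_add, add_neg_cancel, exp_zero, mul_one]

theorem y_antitoneOn (h : IsSolution K b y z) (hK : 0 < K) : AntitoneOn y (Ico 0 b) :=
  (convex_Ico 0 b).antitoneOn_of_hasDerivWithinAt_nonpos h.hasDerivWithinAt_y fun t ht ↦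
    div_nonpos_of_nonpos_of_nonneg (neg_nonpos.2 (h.y_mem t (interior_subset ht)).1)
      (h.denom_pos hK (interior_subset ht)).le

theorem y_le_of_three_le (h : IsSolution K b y z) (hK : 0 < K) {s : ℝ} (hs : s ∈ Ico 0 b)
    (hs3 : 3 ≤ s) : y s ≤ K := by
  by_contra! hys
  have hsub : Icc 0 s ⊆ Ico 0 b := Icc_subset_Ico_right hs.2
  have hKy : ∀ t ∈ Icc 0 s, K ≤ y t := fun t ht ↦
    hys.le.trans (h.y_antitoneOn hK (hsub ht) hs ht.2)
  -- while `y ≥ K`, `D ≤ K + 2y ≤ 3y`, so `y' ≤ -1/3`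
  have hanti : AntitoneOn (fun t ↦ y t + t / 3) (Icc 0 s) := by
    refine (convex_Icc 0 s).antitoneOn_of_hasDerivWithinAt_nonpos (fun t ht ↦
      ((h.hasDerivWithinAt_y t (hsub ht)).mono hsub).add
        ((hasDerivAt_id t).div_const 3).hasDerivWithinAt) fun t ht ↦ ?_
    have ht' := interior_subset (s := Icc 0 s) ht
    have hD := denom_le hK.le (h.y_mem t (hsub ht')).1 (by linarith [(h.y_mem t (hsub ht')).2])
    have : 1 / 3 ≤ y t / (1 + (K - 1) * (1 - y t) ^ 2) := by
      rw [div_le_div_iff₀ (by norm_num) (h.denom_pos hK (hsub ht'))]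
      linarith [hKy t ht']
    simp only [neg_div]
    linarith
  have := hanti ⟨le_rfl, hs.1⟩ ⟨hs.1, le_rfl⟩ hs.1
  simp only [h.y_zero, zero_div, add_zero] at this
  linarith

theorem inv_z_add_antitoneOn (h : IsSolution K b y z) (hK : 0 < K) :
    AntitoneOn (fun t ↦ (z t)⁻¹ + t / 3) (Ico 3 b) := by
  have hsub : Ico 3 b ⊆ Ico 0 b := Ico_subset_Ico_left (by norm_num)
  refine (convex_Ico 3 b).antitoneOn_of_hasDerivWithinAt_nonpos (fun t ht ↦
    (((h.hasDerivWithinAt_z t (hsub ht)).mono hsub).inv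
      (by linarith [h.one_le_z hK (hsub ht)])).add
      ((hasDerivAt_id t).div_const 3).hasDerivWithinAt) fun t ht ↦ ?_
  have ht' := interior_subset (s := Ico 3 b) ht
  have hy := h.y_mem t (hsub ht')
  have hz := h.one_le_z hK (hsub ht')
  have key := sq_mul_denom_le_three_mul_numer hK hy.1 hy.2
    (h.y_le_of_three_le hK (hsub ht') ht'.1) hz
  have hD := h.denom_pos hK (hsub ht')
  rw [neg_div, neg_add_nonpos_iff, le_div_iff₀ (by positivity), le_div_iff₀ hD]
  linarith

end IsSolution

end BiasedProcess

theorem singularity_lt_five_general (K b : ℝ) (hK : 0 < K)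
    (y z : ℝ → ℝ) (hy0 : y 0 = 1) (hz0 : z 0 = 1)
    (hyb : ∀ t ∈ Set.Ico (0:ℝ) b, 0 ≤ y t ∧ y t ≤ 1)
    (hyd : ∀ t ∈ Set.Ico (0:ℝ) b,
      HasDerivWithinAt y (-(y t) / (1 + (K - 1) * (1 - y t) ^ 2)) (Set.Ico 0 b) t)
    (hzd : ∀ t ∈ Set.Ico (0:ℝ) b,
      HasDerivWithinAt z
        ((z t ^ 2 + (K - 1) * (z t - y t) ^ 2) / (1 + (K - 1) * (1 - y t) ^ 2))
        (Set.Ico 0 b) t) :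
    b < 5 := by
  by_contra! hb
  have h : BiasedProcess.IsSolution K b y z := ⟨hy0, hz0, hyb, hyd, hzd⟩
  have h3 : (3 : ℝ) ∈ Ico 3 b := ⟨le_rfl, by linarith⟩
  have h4 : (4 : ℝ) ∈ Ico 3 b := ⟨by norm_num, by linarith⟩
  have hdrop := h.inv_z_add_antitoneOn hK h3 h4 (by norm_num)
  have hz3 : 4 ≤ z 3 := by
    linarith [add_one_le_exp 3, h.exp_le_z hK (Ico_subset_Ico_left (by norm_num) h3)]
  have hz4 : 0 < (z 4)⁻¹ :=
    inv_pos.2 (by linarith [h.one_le_z hK (Ico_subset_Ico_left (by norm_num) h4)])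
  have hz3' : (z 3)⁻¹ ≤ 4⁻¹ := inv_anti₀ (by norm_num) hz3
  simp only at hdrop
  linarith

/-- For every K > 0, if y and z solve the isolated-vertex and susceptibility ODEs
of the biased process G∧_K on [0, b) with y(0) = z(0) = 1 and 0 ≤ y ≤ 1, then
b < 5; i.e. the giant-component threshold t∧_g(K) is less than 5. -/
theorem singularity_lt_five (K b : ℝ) (hK : 0 < K) (hb : 0 < b)
    (y z : ℝ → ℝ) (hy0 : y 0 = 1) (hz0 : z 0 = 1)
    (hyb : ∀ t ∈ Set.Ico (0:ℝ) b, 0 ≤ y t ∧ y t ≤ 1)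
    (hyd : ∀ t ∈ Set.Ico (0:ℝ) b,
      HasDerivWithinAt y (-(y t) / (1 + (K - 1) * (1 - y t) ^ 2)) (Set.Ico 0 b) t)
    (hzd : ∀ t ∈ Set.Ico (0:ℝ) b,
      HasDerivWithinAt z
        ((z t ^ 2 + (K - 1) * (z t - y t) ^ 2) / (1 + (K - 1) * (1 - y t) ^ 2))
        (Set.Ico 0 b) t) :
    b < 5 :=
  singularity_lt_five_general K b hK y z hy0 hz0 hyb hyd hzd
end

section
/- Let K ≥ 0, let G be a simple graph on a finite vertex set V with |V| = n, and let c be the number of isolated vertices of G. For an ordered pair (u,v) ∈ V × V, define w(u,v) = K if both u and v are non-isolated in G, and w(u,v) = 1 otherwise; for u ≠ v let G_{uv} be the graph obtained from G by adding the edge {u,v} (so G_{uv} = G if the edge is already present), and for u = v let G_{uv} = G. Then Σ_{(u,v)∈V×V} w(u,v) = n² + (K−1)·(n−c)², and Σ_{(u,v)∈V×V} w(u,v)·(iso(G) − iso(G_{uv})) = 2·c·(n−1), where iso(H) denotes the number of isolated vertices of the graph H. -/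
/-!
Let `f` be the indicator of the isolated vertices of `G`. The weight is
`1 + (K - 1) (1 - f u) (1 - f v)`, whose double sum is `n² + (K - 1) (n - c)²`.
Adding the edge `uv` with `u ≠ v` destroys exactly the isolated vertices among `u, v`, so the
number of isolated vertices drops by `f u + f v`; whenever this is nonzero the weight is `1`, and
summing `f u + f v` over the ordered pairs `u ≠ v` gives `2 (n - 1) c`.
-/

open Finset

section Sums

variable {ι R : Type*} [Fintype ι] [CommRing R]

theorem sum_sum_one_add_mul_mul (a : R) (g : ι → R) :
    ∑ u, ∑ v, (1 + a * (g u * g v)) = (Fintype.card ι : R) ^ 2 + a * (∑ u, g u) ^ 2 := by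
  simp only [sum_add_distrib, ← mul_sum, ← sum_mul, sum_const, card_univ, nsmul_eq_mul]
  ring

theorem sum_sum_ite_eq_zero_add [DecidableEq ι] (f : ι → R) :
    ∑ u, ∑ v, (if u = v then 0 else f u + f v) = 2 * ((Fintype.card ι : R) - 1) * ∑ u, f u := by
  have hsplit : ∀ u v : ι, (if u = v then 0 else f u + f v)
      = f u + f v - if u = v then f u + f v else 0 := by
    intro u v; split_ifs <;> simp
  simp only [hsplit, sum_sub_distrib, sum_add_distrib, sum_ite_eq, mem_univ, if_true,
    sum_const, card_univ, nsmul_eq_mul, ← mul_sum]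
  ring

end Sums

namespace Set

variable {α R : Type*} [Ring R]

theorem sum_indicator_one [Fintype α] (s : Set α) : ∑ x, s.indicator (1 : α → R) x = s.ncard := by
  classical
  simp [indicator_apply, ncard_eq_toFinset_card']

theorem ncard_sub_ncard_sdiff_singleton (s : Set α) (hs : s.Finite) (a : α) :
    (s.ncard : R) - (s \ {a}).ncard = s.indicator 1 a := by
  by_cases ha : a ∈ s
  · rw [indicator_of_mem ha, ← ncard_sdiff_singleton_add_one ha hs]
    push_cast; simp
  · rw [indicator_of_notMem ha, sdiff_singleton_eq_self ha, sub_self]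

theorem ncard_sub_ncard_sdiff_pair (s : Set α) (hs : s.Finite) {u v : α} (huv : u ≠ v) :
    (s.ncard : R) - (s \ {u, v}).ncard = s.indicator 1 u + s.indicator 1 v := by
  have hv : (s \ {u}).indicator (1 : α → R) v = s.indicator 1 v := by
    classical
    simp [indicator_apply, huv.symm]
  rw [insert_eq, ← sdiff_sdiff, ← hv, ← ncard_sub_ncard_sdiff_singleton s hs,
    ← ncard_sub_ncard_sdiff_singleton _ hs.sdiff]
  abel

theorem ite_notMem_and_notMem_eq (s : Set α) (K : R) (u v : α) [Decidable (u ∉ s ∧ v ∉ s)] :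
    (if u ∉ s ∧ v ∉ s then K else 1) = 1 + (K - 1) * (sᶜ.indicator 1 u * sᶜ.indicator 1 v) := by
  by_cases hu : u ∈ s <;> by_cases hv : v ∈ s <;> simp [hu, hv]

theorem ite_notMem_and_notMem_mul_indicator_add (s : Set α) (K : R) (u v : α)
    [Decidable (u ∉ s ∧ v ∉ s)] :
    (if u ∉ s ∧ v ∉ s then K else 1) * (s.indicator 1 u + s.indicator 1 v)
      = s.indicator 1 u + s.indicator 1 v := by
  by_cases hu : u ∈ s <;> by_cases hv : v ∈ s <;> simp [hu, hv]

end Set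

namespace SimpleGraph

variable {V : Type*} (G : SimpleGraph V)

theorem setOf_isolated_sup_edge {u v : V} (huv : u ≠ v) :
    {x | ∀ y, ¬ (G ⊔ edge u v).Adj x y} = {x | ∀ y, ¬ G.Adj x y} \ {u, v} := by
  ext x
  refine ⟨fun h ↦ ⟨fun y hy ↦ h y (.inl hy), ?_⟩, ?_⟩
  · rintro (rfl | rfl)
    · exact h v (.inr ((edge_adj ..).2 ⟨.inl ⟨rfl, rfl⟩, huv⟩))
    · exact h u (.inr ((edge_adj ..).2 ⟨.inr ⟨rfl, rfl⟩, huv.symm⟩))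
  · rintro ⟨hG, hx⟩ y (hy | hy)
    · exact hG y hy
    · obtain ⟨⟨rfl, -⟩ | ⟨rfl, -⟩, -⟩ := (edge_adj ..).1 hy
      exacts [hx (.inl rfl), hx (.inr rfl)]

end SimpleGraph

open scoped Classical in
theorem weighted_isolated_drift_general {V : Type*} [Fintype V]
    (K : ℝ) (G : SimpleGraph V) (n c : ℕ)
    (hn : Fintype.card V = n)
    (hc : c = {v : V | ∀ x, ¬ G.Adj v x}.ncard)
    (w : V → V → ℝ)
    (hw : ∀ u v, w u v =
      if (¬ ∀ x, ¬ G.Adj u x) ∧ (¬ ∀ x, ¬ G.Adj v x) then K else 1)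
    (Gadd : V → V → SimpleGraph V)
    (hGadd : ∀ u v, Gadd u v = G ⊔ SimpleGraph.fromEdgeSet {s(u, v)}) :
    (∑ u : V, ∑ v : V, w u v) = (n : ℝ) ^ 2 + (K - 1) * ((n : ℝ) - c) ^ 2 ∧
    (∑ u : V, ∑ v : V, w u v *
        (({x : V | ∀ y, ¬ G.Adj x y}.ncard : ℝ)
          - ({x : V | ∀ y, ¬ (Gadd u v).Adj x y}.ncard : ℝ)))
      = 2 * (c : ℝ) * ((n : ℝ) - 1) := by
  subst hn hc
  set I : Set V := {v | ∀ x, ¬ G.Adj v x}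
  have hw' : ∀ u v, w u v = if u ∉ I ∧ v ∉ I then K else 1 := hw
  have hdrop : ∀ u v, w u v * ((I.ncard : ℝ) - {x | ∀ y, ¬ (Gadd u v).Adj x y}.ncard)
      = if u = v then 0 else I.indicator 1 u + I.indicator 1 v := by
    intro u v
    rcases eq_or_ne u v with rfl | huv
    · rw [hGadd, if_pos rfl, ← SimpleGraph.edge, SimpleGraph.sup_edge_self, sub_self, mul_zero]
    · rw [hGadd, if_neg huv, ← SimpleGraph.edge, G.setOf_isolated_sup_edge huv,
        I.ncard_sub_ncard_sdiff_pair I.toFinite huv, hw',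
        Set.ite_notMem_and_notMem_mul_indicator_add]
  have hcompl : (Iᶜ.ncard : ℝ) = Fintype.card V - I.ncard := by
    rw [← Nat.card_eq_fintype_card, ← I.ncard_add_ncard_compl]
    push_cast; ring
  constructor
  · simp only [hw', Set.ite_notMem_and_notMem_eq, sum_sum_one_add_mul_mul, Set.sum_indicator_one,
      hcompl]
  · simp only [hdrop, sum_sum_ite_eq_zero_add, Set.sum_indicator_one]
    ring

open scoped Classical in
/-- Exact one-step weight sums for the approximated biased process G̃∧_K: with
weight K on ordered pairs of non-isolated vertices and 1 otherwise, the total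
weight is n² + (K−1)(n−c)², and the weighted sum of the decrease in the number
of isolated vertices is 2c(n−1). -/
theorem weighted_isolated_drift {V : Type*} [Fintype V] [DecidableEq V]
    (K : ℝ) (hK : 0 ≤ K) (G : SimpleGraph V) (n c : ℕ)
    (hn : Fintype.card V = n)
    (hc : c = {v : V | ∀ x, ¬ G.Adj v x}.ncard)
    (w : V → V → ℝ)
    (hw : ∀ u v, w u v =
      if (¬ ∀ x, ¬ G.Adj u x) ∧ (¬ ∀ x, ¬ G.Adj v x) then K else 1)
    (Gadd : V → V → SimpleGraph V)
    (hGadd : ∀ u v, Gadd u v = G ⊔ SimpleGraph.fromEdgeSet {s(u, v)}) :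
    (∑ u : V, ∑ v : V, w u v) = (n : ℝ) ^ 2 + (K - 1) * ((n : ℝ) - c) ^ 2 ∧
    (∑ u : V, ∑ v : V, w u v *
        (({x : V | ∀ y, ¬ G.Adj x y}.ncard : ℝ)
          - ({x : V | ∀ y, ¬ (Gadd u v).Adj x y}.ncard : ℝ)))
      = 2 * (c : ℝ) * ((n : ℝ) - 1) :=
  weighted_isolated_drift_general K G n c hn hc w hw Gadd hGadd
end
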